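/- arXiv:1509.07487 — 5 statements merged into one kernel-verified Lean document; each statement's English description precedes it below -/
import Mathlib

section
/- Let α ∈ ℂ with α ≠ 0. If α ≠ 1 then H^0(Γ; ℂ_α) = 0; if in addition α is not a root of the characteristic polynomial of M, then H^1(Γ; ℂ_α) = 0 and H^2(Γ; ℂ_α) = 0. -/
/-- Exponent sum of the generator `j` in the word `w` of the free group. -/
def expSum {m : ℕ} (w : FreeGroup (Fin m)) (j : Fin m) : ℤ :=
  Multiplicative.toAdd
    ((FreeGroup.lift fun i => Multiplicative.ofAdd (if i = j then (1 : ℤ) else 0)) w)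

/-- The matrix of the map induced by the automorphism `θ` on the abelianization `ℤ^m`
of the free group: `M i j` is the exponent sum of `γ_j` in `θ(γ_i)`. -/
def abMatrix {m : ℕ} (θ : FreeGroup (Fin m) ≃* FreeGroup (Fin m)) :
    Matrix (Fin m) (Fin m) ℤ :=
  Matrix.of fun i j => expSum (θ (FreeGroup.of i)) j

/-- The semidirect product `Γ = F ⋊_θ ℤ`, in which the generator `τ` of the `ℤ` factor
acts by `θ`. -/
abbrev Gam {m : ℕ} (θ : FreeGroup (Fin m) ≃* FreeGroup (Fin m)) :=
  FreeGroup (Fin m) ⋊[zpowersHom (MulAut (FreeGroup (Fin m))) θ] Multiplicative ℤ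

/-- The projection `ψ : Γ → ℤ` onto the `ℤ` factor. -/
def psi {m : ℕ} {θ : FreeGroup (Fin m) ≃* FreeGroup (Fin m)} (x : Gam θ) : ℤ :=
  Multiplicative.toAdd (SemidirectProduct.rightHom x)

/-!
`H⁰` is killed by `τ`, which acts by `α ≠ 1`. For `H¹`, subtract a coboundary so that the
cocycle vanishes at `τ`; its restriction to `F` is then a homomorphism `φ : F → ℂ` with
`φ ∘ θ = α • φ`, i.e. its values on the generators form an `α`-eigenvector of `M`, so `φ = 0`,
and a cocycle vanishing on the generating set `F ∪ {τ}` vanishes.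

For `H²`, a 2-cocycle `f` defines an extension `E_f` of `Γ` by `ℂ`, and `f` is a coboundary as
soon as `E_f → Γ` has a homomorphic section. Over `F` such a section is given freely by lifts of
the `γ_j`, which can be shifted by any `c ∈ ℂ^m`; it extends over `τ` exactly when `c` solves a
linear system with matrix `α - M`, which is invertible.
-/

section ExpSum

open FreeGroup Matrix

variable {m : ℕ}

lemma toAdd_apply_eq_sum_expSum {R : Type*} [AddCommGroup R]
    (φ : FreeGroup (Fin m) →* Multiplicative R) (w : FreeGroup (Fin m)) :
    (φ w).toAdd = ∑ j, expSum w j • (φ (of j)).toAdd := by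
  induction w using FreeGroup.induction_on with
  | C1 => simp [expSum]
  | of i => simp [expSum]
  | inv_of i ih => simp_all [expSum]
  | mul u v hu hv => simp_all [expSum, add_smul, Finset.sum_add_distrib]

lemma mulVec_abMatrix {R : Type*} [CommRing R] (θ : FreeGroup (Fin m) ≃* FreeGroup (Fin m))
    (φ : FreeGroup (Fin m) →* Multiplicative R) (i : Fin m) :
    ((abMatrix θ).map (Int.cast : ℤ → R) *ᵥ fun j => (φ (of j)).toAdd) i
      = (φ (θ (of i))).toAdd := by
  simp [toAdd_apply_eq_sum_expSum φ (θ (of i)), Matrix.mulVec, dotProduct, abMatrix,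
    zsmul_eq_mul]

end ExpSum

section LinearAlgebra

open FreeGroup Matrix

lemma isUnit_scalar_sub_of_not_isRoot_charpoly {n K : Type*} [Fintype n] [DecidableEq n]
    [Field K] {M : Matrix n n K} {α : K} (h : ¬ M.charpoly.IsRoot α) :
    IsUnit (scalar n α - M) := by
  rw [Polynomial.IsRoot, eval_charpoly] at h
  exact (isUnit_iff_isUnit_det _).2 (isUnit_iff_ne_zero.2 h)

variable {m : ℕ} {R : Type*} [CommRing R] {θ : FreeGroup (Fin m) ≃* FreeGroup (Fin m)} {α : R}
  (hα : IsUnit (scalar (Fin m) α - (abMatrix θ).map (Int.cast : ℤ → R)))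
include hα

lemma eq_one_of_toAdd_map_apply_eq_mul {φ : FreeGroup (Fin m) →* Multiplicative R}
    (hφ : ∀ w, (φ (θ w)).toAdd = α * (φ w).toAdd) : φ = 1 := by
  set v : Fin m → R := fun j => (φ (of j)).toAdd
  have hv : (scalar (Fin m) α - (abMatrix θ).map (Int.cast : ℤ → R)) *ᵥ v = 0 := by
    ext i
    simp [sub_mulVec, mulVec_abMatrix, hφ, v]
  have hv0 : v = 0 := mulVec_injective_of_isUnit hα (hv.trans (mulVec_zero _).symm)
  exact FreeGroup.ext_hom _ _ fun j => congrFun hv0 j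

lemma exists_toAdd_lift_apply_eq_mul_add (b : Fin m → R) :
    ∃ c : Fin m → R, ∀ i,
      (FreeGroup.lift (Multiplicative.ofAdd ∘ c) (θ (of i))).toAdd = α * c i + b i := by
  obtain ⟨c, hc⟩ := mulVec_surjective_iff_isUnit.2 hα (-b)
  refine ⟨c, fun i => ?_⟩
  have hci := congrFun hc i
  have hMc := mulVec_abMatrix θ (FreeGroup.lift (Multiplicative.ofAdd ∘ c)) i
  simp only [FreeGroup.lift_apply_of, Function.comp_apply, toAdd_ofAdd] at hMc
  simp only [sub_mulVec, Pi.sub_apply, Pi.neg_apply, scalar_apply, mulVec_diagonal, hMc] at hci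
  linear_combination -hci

end LinearAlgebra

section SemidirectProduct

open SemidirectProduct

variable {N : Type*} [Group N] {θ : N ≃* N}

lemma SemidirectProduct.inl_apply_eq_conj (n : N) :
    (inl (θ n) : N ⋊[zpowersHom (MulAut N) θ] Multiplicative ℤ)
      = inr (.ofAdd 1) * inl n * (inr (.ofAdd 1))⁻¹ := by
  simpa using inl_aut (φ := zpowersHom (MulAut N) θ) (.ofAdd 1) n

lemma SemidirectProduct.closure_insert_range_inl :
    Subgroup.closure (insert (inr (.ofAdd 1)) (Set.range inl))
      = (⊤ : Subgroup (N ⋊[zpowersHom (MulAut N) θ] Multiplicative ℤ)) := by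
  refine eq_top_iff.2 fun x _ => ?_
  have hinr : inr x.right = (inr (.ofAdd 1) : N ⋊[zpowersHom (MulAut N) θ] _) ^ x.right.toAdd := by
    rw [← map_zpow, ← ofAdd_zsmul, smul_eq_mul, mul_one, ofAdd_toAdd]
  rw [← inl_left_mul_inr_right x, hinr]
  exact mul_mem (Subgroup.subset_closure (Set.mem_insert_of_mem _ ⟨_, rfl⟩))
    (zpow_mem (Subgroup.subset_closure (Set.mem_insert _ _)) _)

lemma SemidirectProduct.exists_hom_of_conj {E : Type*} [Group E] (s : N →* E) (T : E)
    (hs : ∀ n, s (θ n) = T * s n * T⁻¹) :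
    ∃ σ : N ⋊[zpowersHom (MulAut N) θ] Multiplicative ℤ →* E,
      (∀ n, σ (inl n) = s n) ∧ σ (inr (.ofAdd 1)) = T := by
  have hpow : ∀ (k : ℤ) (n : N), s ((θ ^ k : MulAut N) n) = T ^ k * s n * (T ^ k)⁻¹ := by
    intro k
    induction k using Int.induction_on with
    | zero => simp
    | succ k ih =>
      intro n
      rw [zpow_add_one, MulAut.mul_apply, ih, hs, zpow_add_one]
      group
    | pred k ih =>
      intro n
      have hinv := hs (θ.symm n)
      rw [MulEquiv.apply_symm_apply] at hinv
      rw [zpow_sub_one, MulAut.mul_apply, ih, MulAut.inv_apply, zpow_sub_one, hinv]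
      group
  refine ⟨lift s (zpowersHom E T) fun z => MonoidHom.ext fun n => ?_, lift_inl _ _ _, ?_⟩
  · simp only [MonoidHom.comp_apply, MulEquiv.coe_toMonoidHom, zpowersHom_apply,
      MulAut.conj_apply]
    exact hpow z.toAdd n
  · simp [lift_inr]

end SemidirectProduct

namespace groupCohomology

universe u

variable {k G : Type u} [CommRing k] [Group G] {A : Rep k G}

lemma cocycles₁_map_inv_eq_zero (f : cocycles₁ A) {g : G} (hg : f g = 0) : f g⁻¹ = 0 := by
  rw [← A.ρ.inv_self_apply g (f g⁻¹), cocycles₁_map_inv, hg, neg_zero, map_zero]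

lemma cocycles₁_eq_zero_of_closure_eq_top (f : cocycles₁ A) {S : Set G}
    (hS : Subgroup.closure S = ⊤) (hf : ∀ g ∈ S, f g = 0) : f = 0 := by
  have hzero : ∀ g ∈ Subgroup.closure S, f g = 0 := fun g hg => by
    induction hg using Subgroup.closure_induction with
    | mem g hg => exact hf g hg
    | one => exact cocycles₁_map_one f
    | mul g h _ _ hg hh => rw [(mem_cocycles₁_iff f).1 f.2, hg, hh, map_zero, add_zero]
    | inv g _ hg => exact cocycles₁_map_inv_eq_zero f hg
  exact cocycles₁_ext fun g => hzero g (hS ▸ Subgroup.mem_top g)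

lemma cocycles₁_map_conj_of_map_eq_zero (f : cocycles₁ A) {t : G} (ht : f t = 0) (g : G) :
    f (t * g * t⁻¹) = A.ρ t (f g) := by
  rw [mul_assoc, (mem_cocycles₁_iff f).1 f.2, (mem_cocycles₁_iff f).1 f.2,
    cocycles₁_map_inv_eq_zero f ht, ht, map_zero, zero_add, add_zero]

lemma subsingleton_H1_of_forall_mem_coboundaries₁
    (h : ∀ f : cocycles₁ A, ⇑f ∈ coboundaries₁ A) : Subsingleton (H1 A) :=
  subsingleton_of_forall_eq 0 fun x => H1_induction_on x fun f => (H1π_eq_zero_iff f).2 (h f)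

lemma subsingleton_H2_of_forall_mem_coboundaries₂
    (h : ∀ f : cocycles₂ A, ⇑f ∈ coboundaries₂ A) : Subsingleton (H2 A) :=
  subsingleton_of_forall_eq 0 fun x => H2_induction_on x fun f => (H2π_eq_zero_iff f).2 (h f)

@[ext]
structure CocycleExtension (f : cocycles₂ A) where
  fst : A
  snd : G

namespace CocycleExtension

variable {f : cocycles₂ A}

instance : Mul (CocycleExtension f) :=
  ⟨fun x y => ⟨x.fst + A.ρ x.snd y.fst + f (x.snd, y.snd), x.snd * y.snd⟩⟩

-- `f` need not be normalized, so the identity sits over `-f (1, 1)`.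
instance : One (CocycleExtension f) := ⟨⟨-f (1, 1), 1⟩⟩

instance : Inv (CocycleExtension f) :=
  ⟨fun x => ⟨-f (1, 1) - A.ρ x.snd⁻¹ x.fst - f (x.snd⁻¹, x.snd), x.snd⁻¹⟩⟩

@[simp] lemma mul_fst (x y : CocycleExtension f) :
    (x * y).fst = x.fst + A.ρ x.snd y.fst + f (x.snd, y.snd) := rfl

@[simp] lemma mul_snd (x y : CocycleExtension f) : (x * y).snd = x.snd * y.snd := rfl

@[simp] lemma inv_snd (x : CocycleExtension f) : x⁻¹.snd = x.snd⁻¹ := rfl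

instance : Group (CocycleExtension f) := .ofLeftAxioms
  (fun x y z => by
    ext
    · simp only [mul_fst, mul_snd, map_mul, Module.End.mul_apply, map_add]
      linear_combination (norm := module) (mem_cocycles₂_iff f).1 f.2 x.snd y.snd z.snd
    · exact mul_assoc _ _ _)
  (fun x => by
    ext
    · change -f (1, 1) + A.ρ 1 x.fst + f (1, x.snd) = x.fst
      rw [cocycles₂_map_one_fst f x.snd, map_one, Module.End.one_apply]
      abel
    · exact one_mul _)
  (fun x => by
    ext
    · change -f (1, 1) - A.ρ x.snd⁻¹ x.fst - f (x.snd⁻¹, x.snd) + A.ρ x.snd⁻¹ x.fst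
        + f (x.snd⁻¹, x.snd) = -f (1, 1)
      abel
    · exact inv_mul_cancel _)

def sndHom : CocycleExtension f →* G where
  toFun := snd
  map_one' := rfl
  map_mul' _ _ := rfl

def ofFst (a : A) : CocycleExtension f := ⟨a - f (1, 1), 1⟩

lemma ofFst_mul (a : A) (x : CocycleExtension f) : ofFst a * x = ⟨a + x.fst, x.snd⟩ := by
  ext
  · change a - f (1, 1) + A.ρ 1 x.fst + f (1, x.snd) = a + x.fst
    rw [cocycles₂_map_one_fst f x.snd, map_one, Module.End.one_apply]
    abel
  · exact one_mul _

lemma mul_ofFst (x : CocycleExtension f) (a : A) : x * ofFst a = ofFst (A.ρ x.snd a) * x := by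
  rw [ofFst_mul]
  ext
  · change x.fst + A.ρ x.snd (a - f (1, 1)) + f (x.snd, 1) = A.ρ x.snd a + x.fst
    rw [cocycles₂_map_one_snd f x.snd, map_sub]
    abel
  · exact mul_one _

lemma ofFst_add (a b : A) : (ofFst (a + b) : CocycleExtension f) = ofFst a * ofFst b := by
  rw [ofFst_mul]
  ext
  · exact add_sub_assoc a b _
  · rfl

lemma eq_ofFst_mul_of_snd_eq {x y : CocycleExtension f} (h : x.snd = y.snd) :
    x = ofFst (x.fst - y.fst) * y := by
  rw [ofFst_mul, sub_add_cancel, ← h]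

def ofFstMul {H : Type*} [Group H] (s : H →* CocycleExtension f) (l : H →* Multiplicative A)
    (hs : ∀ h a, A.ρ (s h).snd a = a) : H →* CocycleExtension f :=
  .mk' (fun h => ofFst (l h).toAdd * s h) fun h₁ h₂ => by
    rw [map_mul l, map_mul s, toAdd_mul, ofFst_add, mul_assoc, mul_assoc, ← mul_assoc (s h₁),
      mul_ofFst, hs, mul_assoc]

@[simp] lemma ofFstMul_apply {H : Type*} [Group H] (s : H →* CocycleExtension f)
    (l : H →* Multiplicative A) (hs : ∀ h a, A.ρ (s h).snd a = a) (h : H) :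
    ofFstMul s l hs h = ofFst (l h).toAdd * s h := rfl

lemma mem_coboundaries₂_of_section (σ : G →* CocycleExtension f) (hσ : ∀ g, (σ g).snd = g) :
    ⇑f ∈ coboundaries₂ A := by
  refine ⟨fun g => -(σ g).fst, funext fun p => ?_⟩
  have hmul : (σ (p.1 * p.2)).fst = (σ p.1).fst + A.ρ p.1 (σ p.2).fst + f p := by
    rw [map_mul, mul_fst, hσ, hσ]
  change A.ρ p.1 (-(σ p.2).fst) - -(σ (p.1 * p.2)).fst + -(σ p.1).fst = f p
  rw [hmul, map_neg]
  abel

end CocycleExtension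

end groupCohomology

section CharacterRepresentation

open SemidirectProduct groupCohomology Matrix

local notation "τ" => SemidirectProduct.inr (Multiplicative.ofAdd (1 : ℤ))

variable {m : ℕ} {θ : FreeGroup (Fin m) ≃* FreeGroup (Fin m)}

@[simp] lemma psi_inl (u : FreeGroup (Fin m)) : psi (inl u : Gam θ) = 0 := by
  simp [psi]

@[simp] lemma psi_inr (z : Multiplicative ℤ) : psi (inr z : Gam θ) = z.toAdd := by
  simp [psi]

variable {K : Type} [Field K] {α : K} {π : Representation K (Gam θ) K}
  (hπ : ∀ g x, π g x = α ^ psi g * x)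
include hπ

lemma subsingleton_invariants_of_ne_one (hα1 : α ≠ 1) : Subsingleton π.invariants := by
  refine ⟨fun x y => Subtype.ext ?_⟩
  have hzero : ∀ z ∈ π.invariants, z = 0 := fun z hz => by
    have hτz : α * z = z := by simpa [hπ] using hz τ
    exact (mul_left_eq_self₀.1 hτz).resolve_left hα1
  rw [hzero x x.2, hzero y y.2]

lemma mem_coboundaries₁_of_isUnit (hα1 : α ≠ 1)
    (hM : IsUnit (scalar (Fin m) α - (abMatrix θ).map (Int.cast : ℤ → K)))
    (f : cocycles₁ (Rep.of π)) : ⇑f ∈ coboundaries₁ (Rep.of π) := by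
  let c : K := f τ / (α - 1)
  let f' : cocycles₁ (Rep.of π) :=
    f - ⟨d₀₁ (Rep.of π) c, d₀₁_apply_mem_cocycles₁ (A := Rep.of π) c⟩
  have hτ : f' τ = 0 := by
    change f τ - (π τ c - c) = 0
    rw [hπ, psi_inr, toAdd_ofAdd, zpow_one]
    linear_combination -mul_div_cancel₀ (f τ) (sub_ne_zero.2 hα1)
  have hinl : ∀ w, f' (inl w) = 0 := by
    let φ : FreeGroup (Fin m) →* Multiplicative K :=
      .mk' (fun w => .ofAdd (f' (inl w))) fun u v => by
        rw [map_mul, (mem_cocycles₁_iff f').1 f'.2, ← ofAdd_add, add_comm]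
        congr 2
        simp [hπ]
    have hφ : φ = 1 := eq_one_of_toAdd_map_apply_eq_mul hM fun w => by
      change f' (inl (θ w)) = α * f' (inl w)
      rw [inl_apply_eq_conj, cocycles₁_map_conj_of_map_eq_zero f' hτ]
      simp [hπ]
    exact fun w => congrArg Multiplicative.toAdd (DFunLike.congr_fun hφ w)
  have hf' : f' = 0 := cocycles₁_eq_zero_of_closure_eq_top f' closure_insert_range_inl
    (by rintro _ (rfl | ⟨w, rfl⟩) <;> simp [hτ, hinl])
  exact ⟨c, congrArg Subtype.val (sub_eq_zero.1 hf').symm⟩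

lemma mem_coboundaries₂_of_isUnit
    (hM : IsUnit (scalar (Fin m) α - (abMatrix θ).map (Int.cast : ℤ → K)))
    (f : cocycles₂ (Rep.of π)) : ⇑f ∈ coboundaries₂ (Rep.of π) := by
  open CocycleExtension in
  let s₀ : FreeGroup (Fin m) →* CocycleExtension f := FreeGroup.lift fun j => ⟨0, inl (.of j)⟩
  have hs₀ : ∀ w, (s₀ w).snd = inl w := fun w =>
    DFunLike.congr_fun (show sndHom.comp s₀ = inl from FreeGroup.ext_hom _ _ fun j => rfl) w
  let T : CocycleExtension f := ⟨0, τ⟩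
  let b i := (T * s₀ (.of i) * T⁻¹).fst - (s₀ (θ (.of i))).fst
  have hb : ∀ i, T * s₀ (.of i) * T⁻¹ = ofFst (b i) * s₀ (θ (.of i)) := fun i =>
    eq_ofFst_mul_of_snd_eq (by simp [hs₀, T, inl_apply_eq_conj])
  obtain ⟨c, hc⟩ := exists_toAdd_lift_apply_eq_mul_add hM b
  let s := ofFstMul s₀ (FreeGroup.lift (Multiplicative.ofAdd ∘ c)) fun w a => by simp [hs₀, hπ]
  have hs : ∀ w, s (θ w) = T * s w * T⁻¹ := by
    suffices s.comp θ.toMonoidHom = (MulAut.conj T).toMonoidHom.comp s from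
      fun w => DFunLike.congr_fun this w
    refine FreeGroup.ext_hom _ _ fun i => ?_
    have hτc : T * ofFst (c i) = ofFst (α * c i) * T := by simp [mul_ofFst, T, hπ]
    calc s (θ (.of i)) = ofFst (α * c i) * (ofFst (b i) * s₀ (θ (.of i))) := by
          rw [ofFstMul_apply, hc, ofFst_add, mul_assoc]
      _ = T * s (.of i) * T⁻¹ := by
          rw [← hb, ofFstMul_apply, ← mul_assoc, ← mul_assoc, ← hτc]
          simp [mul_assoc]
  obtain ⟨σ, hσinl, hστ⟩ := exists_hom_of_conj s T hs
  refine mem_coboundaries₂_of_section σ fun g => ?_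
  have hσ : sndHom.comp σ = MonoidHom.id _ := MonoidHom.eq_of_eqOn_dense closure_insert_range_inl
    (by rintro _ (rfl | ⟨w, rfl⟩) <;> simp [hστ, hσinl, s, ofFst_mul, hs₀, sndHom, T])
  exact DFunLike.congr_fun hσ g

end CharacterRepresentation

theorem cohomology_C_alpha_vanishing_general (m : ℕ)
    (θ : FreeGroup (Fin m) ≃* FreeGroup (Fin m)) (α : ℂ)
    (π : Representation ℂ (Gam θ) ℂ)
    (hπ : ∀ (g : Gam θ) (x : ℂ), π g x = α ^ psi g * x) :
    (α ≠ 1 → Subsingleton (groupCohomology (Rep.of π) 0)) ∧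
    (α ≠ 1 → ¬ ((abMatrix θ).map (Int.cast : ℤ → ℂ)).charpoly.IsRoot α →
      Subsingleton (groupCohomology (Rep.of π) 1) ∧
        Subsingleton (groupCohomology (Rep.of π) 2)) := by
  refine ⟨fun hα1 => ?_, fun hα1 hroot => ⟨?_, ?_⟩⟩
  · have := subsingleton_invariants_of_ne_one hπ hα1
    exact (groupCohomology.H0Iso (Rep.of π)).toLinearEquiv.toEquiv.subsingleton
  · have hM := isUnit_scalar_sub_of_not_isRoot_charpoly hroot
    exact groupCohomology.subsingleton_H1_of_forall_mem_coboundaries₁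
      (mem_coboundaries₁_of_isUnit hπ hα1 hM)
  · have hM := isUnit_scalar_sub_of_not_isRoot_charpoly hroot
    exact groupCohomology.subsingleton_H2_of_forall_mem_coboundaries₂
      (mem_coboundaries₂_of_isUnit hπ hM)

/-- Let `α ∈ ℂ*`, and let `ℂ_α` be the one-dimensional `Γ`-module on which `γ` acts by
multiplication by `α^(ψ γ)`.  If `α ≠ 1` then `H⁰(Γ; ℂ_α) = 0`; if in addition `α` is
not a root of the characteristic polynomial of `M`, then `H¹(Γ; ℂ_α) = 0` and
`H²(Γ; ℂ_α) = 0`. -/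
theorem cohomology_C_alpha_vanishing (m : ℕ) (hm : 1 ≤ m)
    (θ : FreeGroup (Fin m) ≃* FreeGroup (Fin m)) (α : ℂ) (hα : α ≠ 0)
    (π : Representation ℂ (Gam θ) ℂ)
    (hπ : ∀ (g : Gam θ) (x : ℂ), π g x = α ^ psi g * x) :
    (α ≠ 1 → Subsingleton (groupCohomology (Rep.of π) 0)) ∧
    (α ≠ 1 → ¬ ((abMatrix θ).map (Int.cast : ℤ → ℂ)).charpoly.IsRoot α →
      Subsingleton (groupCohomology (Rep.of π) 1) ∧
        Subsingleton (groupCohomology (Rep.of π) 2)) :=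
  cohomology_C_alpha_vanishing_general m θ α π hπ
end

section
/- Let λ ∈ ℂ with λ ≠ 0 and let a = (a_1, …, a_m) ∈ ℂ^m satisfy M a = λ² a (viewing M as a complex matrix). Then there exists a unique group homomorphism ρ_λ : Γ → SL(2,ℂ) with ρ_λ(γ_i) = [[1, a_i],[0, 1]] for all 1 ≤ i ≤ m and ρ_λ(τ) = [[λ, 0],[0, λ^{−1}]]; moreover ρ_λ is reducible, with every element of its image preserving the line in ℂ² spanned by (1,0). -/
/-!
The substitution `γ_i ↦ [[1, a_i], [0, 1]]` factors through the abelianization, so it sends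
`θ(γ_i)` to the unipotent matrix with entry `(M a)_i = λ² a_i`, which is the conjugate of
`[[1, a_i], [0, 1]]` by `diag(λ, λ⁻¹)`. So this diagonal matrix intertwines the representation of
`F` with `θ`, and the representation extends to `F ⋊_θ ℤ` by sending `τ` to it; it is unique since
the `γ_i` and `τ` generate `Γ`. All these generators are upper triangular, hence so is the whole
image, and upper triangular matrices preserve the line `ℂ · (1, 0)`.
-/

open scoped MatrixGroups

namespace Matrix.SpecialLinearGroup

variable {R : Type*} [CommRing R]

def unipotent : Multiplicative R →* SL(2, R) where
  toFun c := ⟨!![1, c.toAdd; 0, 1], by simp [det_fin_two_of]⟩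
  map_one' := by ext i j; fin_cases i <;> fin_cases j <;> rfl
  map_mul' b c := Subtype.ext <| by
    change !![1, (b * c).toAdd; 0, 1] = !![1, b.toAdd; 0, 1] * !![(1 : R), c.toAdd; 0, 1]
    simp [add_comm]

@[simp]
lemma coe_unipotent (c : Multiplicative R) :
    (unipotent c : Matrix (Fin 2) (Fin 2) R) = !![1, c.toAdd; 0, 1] := rfl

def diagUnit (u : Rˣ) : SL(2, R) :=
  ⟨!![(u : R), 0; 0, ↑u⁻¹], by simp [det_fin_two_of]⟩

@[simp]
lemma coe_diagUnit (u : Rˣ) :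
    (diagUnit u : Matrix (Fin 2) (Fin 2) R) = !![(u : R), 0; 0, ↑u⁻¹] := rfl

lemma diagUnit_mul_unipotent_mul_inv (u : Rˣ) (c : R) :
    diagUnit u * unipotent (.ofAdd c) * (diagUnit u)⁻¹ = unipotent (.ofAdd (↑(u ^ 2) * c)) := by
  refine mul_inv_eq_of_eq_mul ?_
  ext i j
  fin_cases i <;> fin_cases j <;> simp [pow_two, mul_assoc, mul_left_comm (u : R) c]

def upperTriangular : Subgroup SL(2, R) where
  carrier := {A | A 1 0 = 0}
  one_mem' := by simp
  mul_mem' {A B} hA hB := by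
    simp_all [Matrix.mul_apply, Fin.sum_univ_two]
  inv_mem' {A} hA := by
    simp_all [coe_inv, adjugate_fin_two]

lemma unipotent_mem_upperTriangular (c : Multiplicative R) : unipotent c ∈ upperTriangular := by
  simp [upperTriangular]

lemma diagUnit_mem_upperTriangular (u : Rˣ) : diagUnit u ∈ upperTriangular := by
  simp [upperTriangular]

lemma mulVec_mem_span_of_mem_upperTriangular {A : SL(2, R)} (hA : A ∈ upperTriangular)
    {w : Fin 2 → R} (hw : w ∈ Submodule.span R {![1, 0]}) :
    (A : Matrix (Fin 2) (Fin 2) R) *ᵥ w ∈ Submodule.span R {![1, 0]} := by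
  obtain ⟨c, rfl⟩ := Submodule.mem_span_singleton.mp hw
  refine Submodule.mem_span_singleton.mpr ⟨c * A 0 0, ?_⟩
  ext k
  fin_cases k <;> simp [mulVec, dotProduct, Fin.sum_univ_two, show A 1 0 = 0 from hA, mul_comm]

end Matrix.SpecialLinearGroup

section expSum

variable {m : ℕ}

lemma expSum_mul (x y : FreeGroup (Fin m)) (j : Fin m) :
    expSum (x * y) j = expSum x j + expSum y j := by
  simp [expSum]

lemma expSum_inv (x : FreeGroup (Fin m)) (j : Fin m) : expSum x⁻¹ j = -expSum x j := by
  simp [expSum]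

lemma expSum_of (i j : Fin m) : expSum (FreeGroup.of i) j = if i = j then 1 else 0 := by
  simp [expSum]

lemma toAdd_lift_ofAdd {A : Type*} [AddCommGroup A] (a : Fin m → A) (w : FreeGroup (Fin m)) :
    (FreeGroup.lift (fun i => Multiplicative.ofAdd (a i)) w).toAdd = ∑ j, expSum w j • a j := by
  induction w using FreeGroup.induction_on with
  | C1 => simp [expSum]
  | of i => simp [expSum_of]
  | inv_of i => simp [expSum_inv, expSum_of]
  | mul x y hx hy => simp [hx, hy, expSum_mul, add_smul, Finset.sum_add_distrib]

lemma lift_ofAdd_apply_of_of_mulVec_eq_smul {R : Type*} [CommRing R]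
    {θ : FreeGroup (Fin m) ≃* FreeGroup (Fin m)} {a : Fin m → R} {μ : R}
    (ha : ((abMatrix θ).map (Int.cast : ℤ → R)).mulVec a = μ • a) (i : Fin m) :
    FreeGroup.lift (fun i => Multiplicative.ofAdd (a i)) (θ (FreeGroup.of i)) =
      .ofAdd (μ * a i) :=
  Multiplicative.toAdd.injective <| by
    simpa [toAdd_lift_ofAdd, Matrix.mulVec, dotProduct, abMatrix] using congrFun ha i

end expSum

namespace SemidirectProduct

variable {N G : Type*} [Group N] [Group G]

lemma hom_ext_freeGroup_zpowers {ι : Type*} {θ : MulAut (FreeGroup ι)}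
    {f f' : FreeGroup ι ⋊[zpowersHom _ θ] Multiplicative ℤ →* G}
    (hof : ∀ i, f (inl (.of i)) = f' (inl (.of i)))
    (hτ : f (inr (.ofAdd 1)) = f' (inr (.ofAdd 1))) : f = f' :=
  hom_ext (FreeGroup.ext_hom _ _ hof) (MonoidHom.ext_mint hτ)

/-- The pairs `(α, g)` along which `g` intertwines `φ` with `α` form a subgroup, so
compatibility with `θ` propagates to all powers of `θ`. -/
def conjCompatible (φ : N →* G) : Subgroup (MulAut N × G) where
  carrier := {p | ∀ n, φ (p.1 n) = p.2 * φ n * p.2⁻¹}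
  one_mem' n := by simp
  mul_mem' {p q} hp hq n := by
    simp only [Prod.fst_mul, Prod.snd_mul, MulAut.mul_apply]
    rw [hp, hq]
    group
  inv_mem' {p} hp n := by
    have := hp (p.1⁻¹ n)
    simp only [MulAut.apply_inv_self] at this
    simp only [Prod.fst_inv, Prod.snd_inv, this]
    group

def liftZPowers (φ : N →* G) (θ : MulAut N) (g : G) (h : ∀ n, φ (θ n) = g * φ n * g⁻¹) :
    N ⋊[zpowersHom (MulAut N) θ] Multiplicative ℤ →* G :=
  lift φ (zpowersHom G g) fun k => by
    ext n
    simpa [← map_zpow] using (conjCompatible φ).zpow_mem (x := (θ, g)) h k.toAdd n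

variable {φ : N →* G} {θ : MulAut N} {g : G} {h : ∀ n, φ (θ n) = g * φ n * g⁻¹}

@[simp]
lemma liftZPowers_inl (n : N) : liftZPowers φ θ g h (inl n) = φ n := lift_inl ..

@[simp]
lemma liftZPowers_inr_ofAdd_one : liftZPowers φ θ g h (inr (.ofAdd 1)) = g := by
  simp [liftZPowers]

lemma liftZPowers_mem {H : Subgroup G} (hφ : ∀ n, φ n ∈ H) (hg : g ∈ H)
    (x : N ⋊[zpowersHom (MulAut N) θ] Multiplicative ℤ) : liftZPowers φ θ g h x ∈ H := by
  rw [← inl_left_mul_inr_right x, map_mul, liftZPowers, lift_inl, lift_inr]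
  exact H.mul_mem (hφ _) (H.zpow_mem hg _)

end SemidirectProduct

open SemidirectProduct Matrix.SpecialLinearGroup

theorem exists_unique_rho_lambda_general (m : ℕ)
    (θ : FreeGroup (Fin m) ≃* FreeGroup (Fin m)) (lam : ℂ) (hlam : lam ≠ 0)
    (a : Fin m → ℂ)
    (hMa : ((abMatrix θ).map (Int.cast : ℤ → ℂ)).mulVec a = lam ^ 2 • a) :
    (∃! ρ : Gam θ →* Matrix.SpecialLinearGroup (Fin 2) ℂ,
      (∀ i : Fin m,
        (ρ (SemidirectProduct.inl (FreeGroup.of i)) : Matrix (Fin 2) (Fin 2) ℂ) =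
          !![1, a i; 0, 1]) ∧
      (ρ (SemidirectProduct.inr (Multiplicative.ofAdd 1)) : Matrix (Fin 2) (Fin 2) ℂ) =
        !![lam, 0; 0, lam⁻¹]) ∧
    (∀ ρ : Gam θ →* Matrix.SpecialLinearGroup (Fin 2) ℂ,
      ((∀ i : Fin m,
        (ρ (SemidirectProduct.inl (FreeGroup.of i)) : Matrix (Fin 2) (Fin 2) ℂ) =
          !![1, a i; 0, 1]) ∧
      (ρ (SemidirectProduct.inr (Multiplicative.ofAdd 1)) : Matrix (Fin 2) (Fin 2) ℂ) =
        !![lam, 0; 0, lam⁻¹]) →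
      ∀ (g : Gam θ) (w : Fin 2 → ℂ), w ∈ Submodule.span ℂ {![(1 : ℂ), 0]} →
        ((ρ g : Matrix (Fin 2) (Fin 2) ℂ)).mulVec w ∈ Submodule.span ℂ {![(1 : ℂ), 0]}) := by
  set u := Units.mk0 lam hlam
  set Φ : FreeGroup (Fin m) →* SL(2, ℂ) :=
    unipotent.comp (FreeGroup.lift fun i => .ofAdd (a i))
  have hΦθ : ∀ x, Φ (θ x) = diagUnit u * Φ x * (diagUnit u)⁻¹ := by
    suffices Φ.comp θ.toMonoidHom = (MulAut.conj (diagUnit u)).toMonoidHom.comp Φ from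
      DFunLike.congr_fun this
    refine FreeGroup.ext_hom _ _ fun i => ?_
    simp [Φ, lift_ofAdd_apply_of_of_mulVec_eq_smul hMa, diagUnit_mul_unipotent_mul_inv, u]
  set ρ₀ := liftZPowers Φ θ (diagUnit u) hΦθ
  have hρ₀ : (∀ i, (ρ₀ (inl (.of i)) : Matrix (Fin 2) (Fin 2) ℂ) = !![1, a i; 0, 1]) ∧
      (ρ₀ (inr (.ofAdd 1)) : Matrix (Fin 2) (Fin 2) ℂ) = !![lam, 0; 0, lam⁻¹] :=
    ⟨fun i => by simp [ρ₀, Φ], by simp [ρ₀, u]⟩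
  refine ⟨⟨ρ₀, hρ₀, fun ρ hρ => ?_⟩, fun ρ hρ g w hw => ?_⟩
  all_goals
    have hρρ₀ : ρ = ρ₀ := hom_ext_freeGroup_zpowers
      (fun i => Subtype.ext ((hρ.1 i).trans (hρ₀.1 i).symm))
      (Subtype.ext (hρ.2.trans hρ₀.2.symm))
  · exact hρρ₀
  · rw [hρρ₀]
    refine mulVec_mem_span_of_mem_upperTriangular (liftZPowers_mem ?_ ?_ g) hw
    · exact fun _ => unipotent_mem_upperTriangular _
    · exact diagUnit_mem_upperTriangular u

/-- Given `λ ≠ 0` and `a ∈ ℂ^m` with `M a = λ² a` (for `M` the abelianization matrix of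
`θ`), there is a unique homomorphism `ρ_λ : Γ → SL(2,ℂ)` with `ρ_λ(γ_i) = [[1,a_i],[0,1]]`
and `ρ_λ(τ) = [[λ,0],[0,λ⁻¹]]`; moreover it is reducible, every element of its image
preserving the line spanned by `(1,0)`. -/
theorem exists_unique_rho_lambda (m : ℕ) (hm : 1 ≤ m)
    (θ : FreeGroup (Fin m) ≃* FreeGroup (Fin m)) (lam : ℂ) (hlam : lam ≠ 0)
    (a : Fin m → ℂ)
    (hMa : ((abMatrix θ).map (Int.cast : ℤ → ℂ)).mulVec a = lam ^ 2 • a) :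
    (∃! ρ : Gam θ →* Matrix.SpecialLinearGroup (Fin 2) ℂ,
      (∀ i : Fin m,
        (ρ (SemidirectProduct.inl (FreeGroup.of i)) : Matrix (Fin 2) (Fin 2) ℂ) =
          !![1, a i; 0, 1]) ∧
      (ρ (SemidirectProduct.inr (Multiplicative.ofAdd 1)) : Matrix (Fin 2) (Fin 2) ℂ) =
        !![lam, 0; 0, lam⁻¹]) ∧
    (∀ ρ : Gam θ →* Matrix.SpecialLinearGroup (Fin 2) ℂ,
      ((∀ i : Fin m,
        (ρ (SemidirectProduct.inl (FreeGroup.of i)) : Matrix (Fin 2) (Fin 2) ℂ) =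
          !![1, a i; 0, 1]) ∧
      (ρ (SemidirectProduct.inr (Multiplicative.ofAdd 1)) : Matrix (Fin 2) (Fin 2) ℂ) =
        !![lam, 0; 0, lam⁻¹]) →
      ∀ (g : Gam θ) (w : Fin 2 → ℂ), w ∈ Submodule.span ℂ {![(1 : ℂ), 0]} →
        ((ρ g : Matrix (Fin 2) (Fin 2) ℂ)).mulVec w ∈ Submodule.span ℂ {![(1 : ℂ), 0]}) :=
  exists_unique_rho_lambda_general m θ lam hlam a hMa
end

section
/- Let n ≥ 2, let λ ∈ ℂ with λ ≠ 0 and |λ| ≠ 1, and let a ∈ ℂ with a ≠ 0. Let A, B : ℝ → M(n,ℂ) be infinitely differentiable matrix-valued functions such that: A(t) is diagonal for every t; A(0) = diag(λ^{n−1}, λ^{n−3}, …, λ^{−n+1}); B(0) is the upper triangular matrix whose (j,l) entry is (−a)^{l−j}·binomial(l−1, l−j) for j ≤ l and 0 for j > l; and, writing b(t) for the (n,1) entry of B(t), the derivatives satisfy b^{(k)}(0) = 0 for all 1 ≤ k ≤ n−2 while b^{(n−1)}(0) ≠ 0. Then there exists ε > 0 such that for every t with 0 < |t| < ε, the unital ℂ-subalgebra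 of M(n,ℂ) generated by A(t) and B(t) is all of M(n,ℂ). -/
open Filter Topology
open scoped ContDiff

private lemma vanish_bound : ∀ (m : ℕ) (f : ℝ → ℂ), ContDiff ℝ ∞ f →
    (∀ k ≤ m, iteratedDeriv k f 0 = 0) → ∀ ε : ℝ, 0 < ε →
    ∀ᶠ t in 𝓝 (0:ℝ), ‖f t‖ ≤ ε * |t| ^ m := by
  intro m
  induction m with
  | zero =>
    intro f hf h0 ε hε
    have hf0 : f 0 = 0 := by simpa using h0 0 le_rfl
    have h1 := hf.continuous.tendsto 0
    rw [hf0] at h1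
    filter_upwards [h1.eventually (Metric.ball_mem_nhds (0:ℂ) hε)] with t ht
    have : ‖f t‖ < ε := by simpa [dist_eq_norm] using ht
    simpa using this.le
  | succ m ih =>
    intro f hf h0 ε hε
    have hdf : ContDiff ℝ ∞ (deriv f) := (contDiff_infty_iff_deriv.mp hf).2
    have h0' : ∀ k ≤ m, iteratedDeriv k (deriv f) 0 = 0 := fun k hk => by
      rw [← iteratedDeriv_succ']
      exact h0 (k+1) (by omega)
    obtain ⟨δ, hδ, hδ'⟩ := Metric.eventually_nhds_iff.mp (ih (deriv f) hdf h0' ε hε)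
    rw [Metric.eventually_nhds_iff]
    refine ⟨δ, hδ, fun {t} ht => ?_⟩
    have habs : |t| < δ := by simpa [Real.dist_eq] using ht
    have key : ‖f t - f 0‖ ≤ (ε * |t| ^ m) * ‖t - 0‖ := by
      apply Convex.norm_image_sub_le_of_norm_hasDerivWithin_le
        (f' := deriv f) (s := Set.uIcc 0 t)
      · intro x _
        exact (((contDiff_infty_iff_deriv.mp hf).1) x).hasDerivAt.hasDerivWithinAt
      · intro x hx
        have hxt : |x| ≤ |t| := by
          rcases le_total 0 t with h | h
          · rw [Set.uIcc_of_le h] at hx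
            rw [abs_of_nonneg hx.1, abs_of_nonneg h]; exact hx.2
          · rw [Set.uIcc_of_ge h] at hx
            rw [abs_of_nonpos hx.2, abs_of_nonpos h]; linarith [hx.1]
        have hb := hδ' (y := x) (by simpa [Real.dist_eq] using lt_of_le_of_lt hxt habs)
        calc ‖deriv f x‖ ≤ ε * |x| ^ m := hb
          _ ≤ ε * |t| ^ m := by gcongr
      · exact convex_uIcc 0 t
      · exact Set.left_mem_uIcc
      · exact Set.right_mem_uIcc
    have hf0 : f 0 = 0 := by simpa using h0 0 (by omega)
    rw [hf0, sub_zero] at key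
    calc ‖f t‖ ≤ ε * |t|^m * ‖t - 0‖ := key
      _ = ε * |t|^(m+1) := by rw [sub_zero, Real.norm_eq_abs]; ring

private lemma iterderiv_monomial (c : ℂ) (p : ℕ) : ∀ (k : ℕ),
    iteratedDeriv k (fun t : ℝ => t ^ p • c) =
      fun t => ((p.descFactorial k : ℝ) * t ^ (p - k)) • c := by
  intro k
  induction k with
  | zero => simp
  | succ k ih =>
    rw [iteratedDeriv_succ, ih]
    funext t
    have hd : DifferentiableAt ℝ (fun t : ℝ => (p.descFactorial k : ℝ) * t ^ (p - k)) t := by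
      fun_prop
    rw [deriv_smul_const hd, deriv_const_mul _ (by fun_prop), deriv_pow_field]
    congr 1
    rw [Nat.descFactorial_succ, Nat.cast_mul, Nat.sub_sub]
    ring

private lemma eventually_ne_of_iteratedDeriv (f : ℝ → ℂ) (hf : ContDiff ℝ ∞ f) (m : ℕ)
    (h0 : ∀ k ≤ m, iteratedDeriv k f 0 = 0)
    (hm : iteratedDeriv (m+1) f 0 ≠ 0) :
    ∀ᶠ t in 𝓝[≠] (0:ℝ), f t ≠ 0 := by
  set c := iteratedDeriv (m+1) f 0 with hc
  set c' : ℂ := ((Nat.factorial (m+1) : ℂ))⁻¹ * c with hc'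
  have hfac : (Nat.factorial (m+1) : ℂ) ≠ 0 := Nat.cast_ne_zero.mpr (Nat.factorial_ne_zero _)
  have hc'0 : c' ≠ 0 := mul_ne_zero (inv_ne_zero hfac) hm
  set g : ℝ → ℂ := fun t => f t - t ^ (m+1) • c' with hg
  have hmono : ContDiff ℝ ∞ (fun t : ℝ => t ^ (m+1) • c') :=
    (contDiff_id.pow _).smul contDiff_const
  have hgs : ContDiff ℝ ∞ g := hf.sub hmono
  have hgd : ∀ k ≤ m + 1, iteratedDeriv k g 0 = 0 := by
    intro k hk
    have hsub : iteratedDeriv k g 0 = iteratedDeriv k f 0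
        - iteratedDeriv k (fun t : ℝ => t ^ (m+1) • c') 0 := by
      simp only [hg, ← iteratedDerivWithin_univ]
      exact iteratedDerivWithin_sub (Set.mem_univ 0) uniqueDiffOn_univ
        ((hf.of_le (by exact_mod_cast le_top)).contDiffWithinAt) ((hmono.of_le (by exact_mod_cast le_top)).contDiffWithinAt)
    have hmv : iteratedDeriv k (fun t : ℝ => t ^ (m+1) • c') 0
        = (((m+1).descFactorial k : ℝ) * (0:ℝ) ^ (m+1-k)) • c' := by
      rw [iterderiv_monomial]
    rw [hsub, hmv]
    rcases eq_or_lt_of_le hk with rfl | hk'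
    · rw [← hc]
      simp only [Nat.sub_self, pow_zero, mul_one, Nat.descFactorial_self]
      rw [hc', Complex.real_smul]
      push_cast
      rw [← mul_assoc, mul_inv_cancel₀ hfac, one_mul, sub_self]
    · rw [h0 k (by omega)]
      have h2 : (m+1) - k ≠ 0 := by omega
      rw [zero_pow h2]
      simp
  have hb := vanish_bound (m+1) g hgs hgd (‖c'‖/2) (half_pos (norm_pos_iff.mpr hc'0))
  filter_upwards [hb.filter_mono nhdsWithin_le_nhds, self_mem_nhdsWithin] with t ht ht0
  intro hft
  have ht0' : (0:ℝ) < |t| := abs_pos.mpr ht0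
  have hgt : ‖g t‖ = |t|^(m+1) * ‖c'‖ := by
    rw [hg]
    simp only [hft, zero_sub, norm_neg, norm_smul, Real.norm_eq_abs, abs_pow]
  rw [hgt] at ht
  have hpow : (0:ℝ) < |t|^(m+1) := pow_pos ht0' _
  have hcpos : (0:ℝ) < ‖c'‖ := norm_pos_iff.mpr hc'0
  nlinarith

private lemma adjoin_pair_eq_top (n : ℕ) (hn : 2 ≤ n) (M N : Matrix (Fin n) (Fin n) ℂ)
    (hdiag : ∀ i j : Fin n, i ≠ j → M i j = 0)
    (hd : ∀ i j : Fin n, i ≠ j → M i i ≠ M j j)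
    (hupper : ∀ i j : Fin n, (i:ℕ) ≤ (j:ℕ) → N i j ≠ 0)
    (hlow : N ⟨n-1, (by omega : n - 1 < n + 0)⟩ ⟨0, (by omega : 0 < n + 0)⟩ ≠ 0) :
    Algebra.adjoin ℂ {M, N} = ⊤ := by
  set S := Algebra.adjoin ℂ {M, N} with hS
  have hMS : M ∈ S := Algebra.subset_adjoin (Set.mem_insert _ _)
  have hNS : N ∈ S := Algebra.subset_adjoin (Set.mem_insert_of_mem _ rfl)
  set d : Fin n → ℂ := fun i => M i i with hdv
  have hMdiag : M = Matrix.diagonal d := by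
    ext i j
    by_cases h : i = j
    · subst h; simp [Matrix.diagonal_apply_eq, hdv]
    · rw [hdiag i j h, Matrix.diagonal_apply_ne _ h]
  have hinj : Function.Injective d := by
    intro i j h
    by_contra hij
    exact hd i j hij h
  have hEdiag : ∀ i : Fin n, Matrix.single i i (1:ℂ) ∈ S := by
    intro i
    set p := Lagrange.basis Finset.univ d i with hp
    have hmem : Polynomial.aeval M p ∈ S := by
      have h1 : Polynomial.aeval M p ∈ Algebra.adjoin ℂ {M} :=
        Polynomial.aeval_mem_adjoin_singleton ℂ M
      exact (Algebra.adjoin_mono (Set.singleton_subset_iff.mpr (Set.mem_insert _ _))) h1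
    have heval : Polynomial.aeval M p
        = Matrix.diagonal (fun j => Polynomial.eval (d j) p) := by
      rw [hMdiag]
      have h2 : Matrix.diagonal d = Matrix.diagonalAlgHom (n := Fin n) ℂ d := rfl
      rw [h2, Polynomial.aeval_algHom_apply]
      have h3 : Polynomial.aeval d p = fun j => Polynomial.eval (d j) p := by
        funext j
        rw [Polynomial.aeval_fn_apply, ← Polynomial.coe_aeval_eq_eval]
      rw [h3]
      rfl
    have hone : Polynomial.eval (d i) p = 1 :=
      Lagrange.eval_basis_self hinj.injOn (Finset.mem_univ i)
    have hzero : ∀ j, j ≠ i → Polynomial.eval (d j) p = 0 := fun j hj =>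
      Lagrange.eval_basis_of_ne (Ne.symm hj) (Finset.mem_univ j)
    have hfin : Matrix.diagonal (fun j => Polynomial.eval (d j) p)
        = Matrix.single i i 1 := by
      ext a b
      by_cases hab : a = b
      · subst hab
        by_cases hai : a = i
        · subst hai
          simp [hone, Matrix.single]
        · rw [Matrix.diagonal_apply_eq, hzero a hai]
          simp only [Matrix.single, Matrix.of_apply]
          rw [if_neg (fun h => hai h.1.symm)]
      · rw [Matrix.diagonal_apply_ne _ hab]
        simp only [Matrix.single, Matrix.of_apply]
        rw [if_neg]
        rintro ⟨rfl, rfl⟩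
        exact hab rfl
    rw [heval, hfin] at hmem
    exact hmem
  have hstep : ∀ i j : Fin n, N i j ≠ 0 → Matrix.single i j (1:ℂ) ∈ S := by
    intro i j hij
    have h1 : Matrix.single i i (1:ℂ) * N * Matrix.single j j 1
        = N i j • Matrix.single i j 1 := by
      ext x y
      by_cases hxi : x = i
      · subst hxi
        by_cases hyj : y = j
        · subst hyj
          rw [Matrix.mul_single_apply_same, Matrix.single_mul_apply_same]
          simp [Matrix.single]
        · rw [Matrix.mul_single_apply_of_ne (hbj := hyj)]
          simp only [Matrix.smul_apply, Matrix.single, Matrix.of_apply]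
          rw [if_neg (fun h => hyj h.2.symm)]
          simp
      · by_cases hyj : y = j
        · subst hyj
          rw [Matrix.mul_single_apply_same,
            Matrix.single_mul_apply_of_ne (h := hxi)]
          simp only [Matrix.smul_apply, Matrix.single, Matrix.of_apply]
          rw [if_neg (fun h => hxi h.1.symm)]
          simp
        · rw [Matrix.mul_single_apply_of_ne (hbj := hyj)]
          simp only [Matrix.smul_apply, Matrix.single, Matrix.of_apply]
          rw [if_neg (fun h => hyj h.2.symm)]
          simp
    have h2 : Matrix.single i i (1:ℂ) * N * Matrix.single j j 1 ∈ S :=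
      S.mul_mem (S.mul_mem (hEdiag i) hNS) (hEdiag j)
    rw [h1] at h2
    have h3 := S.smul_mem h2 (N i j)⁻¹
    rwa [smul_smul, inv_mul_cancel₀ hij, one_smul] at h3
  have hall : ∀ i j : Fin n, Matrix.single i j (1:ℂ) ∈ S := by
    intro i j
    rcases le_or_gt (i:ℕ) (j:ℕ) with h | h
    · exact hstep i j (hupper i j h)
    · have e1 := hstep i ⟨n-1, by omega⟩
        (hupper i ⟨n-1, by omega⟩ (by have := i.isLt; simp; omega))
      have e2 := hstep ⟨n-1, by omega⟩ ⟨0, by omega⟩ hlow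
      have e3 := hstep ⟨0, by omega⟩ j (hupper _ j (by simp))
      have h4 := S.mul_mem (S.mul_mem e1 e2) e3
      rwa [Matrix.single_mul_single_same, Matrix.single_mul_single_same,
        one_mul, one_mul] at h4
  rw [eq_top_iff]
  rintro M' -
  rw [Matrix.matrix_eq_sum_single M']
  apply sum_mem
  intro i _
  apply sum_mem
  intro j _
  have h5 : Matrix.single i j (M' i j) = M' i j • Matrix.single i j (1:ℂ) := by
    rw [Matrix.smul_single, smul_eq_mul, mul_one]
  rw [h5]
  exact S.smul_mem (hall i j) _

/-- Let `n ≥ 2`, `λ ≠ 0` with `|λ| ≠ 1`, and `a ≠ 0`.  Let `A, B : ℝ → M(n,ℂ)` be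
infinitely differentiable (entrywise) with `A(t)` diagonal for all `t`,
`A(0) = diag(λ^(n-1), λ^(n-3), …, λ^(-n+1))`, `B(0)` the upper triangular matrix with
`(j,l)` entry `(-a)^(l-j) * choose(l-1, l-j)` for `j ≤ l` (1-based; here 0-based:
`(-a)^(l-j) * choose(l, l-j)`), and whose `(n,1)` entry `b(t)` satisfies `b⁽ᵏ⁾(0) = 0`
for `1 ≤ k ≤ n-2` and `b⁽ⁿ⁻¹⁾(0) ≠ 0`.  Then for all sufficiently small `t ≠ 0`, the
unital `ℂ`-subalgebra of `M(n,ℂ)` generated by `A(t)` and `B(t)` is all of `M(n,ℂ)`. -/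
theorem generates_matrix_algebra (n : ℕ) (hn : 2 ≤ n) (lam : ℂ) (hlam : lam ≠ 0)
    (hlam1 : ‖lam‖ ≠ 1) (a : ℂ) (ha : a ≠ 0)
    (A B : ℝ → Matrix (Fin n) (Fin n) ℂ)
    (hAsmooth : ∀ i j : Fin n, ContDiff ℝ (⊤ : ℕ∞) fun t => A t i j)
    (hBsmooth : ∀ i j : Fin n, ContDiff ℝ (⊤ : ℕ∞) fun t => B t i j)
    (hAdiag : ∀ (t : ℝ) (i j : Fin n), i ≠ j → A t i j = 0)
    (hA0 : A 0 = Matrix.diagonal fun l : Fin n => lam ^ ((n : ℤ) - 1 - 2 * (l : ℤ)))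
    (hB0 : ∀ j l : Fin n, B 0 j l =
      if (j : ℕ) ≤ (l : ℕ) then
        (-a) ^ ((l : ℕ) - (j : ℕ)) * ((l : ℕ).choose ((l : ℕ) - (j : ℕ)) : ℂ)
      else 0)
    (hder0 : ∀ k : ℕ, 1 ≤ k → k ≤ n - 2 →
      iteratedDeriv k (fun t => B t ⟨n - 1, by omega⟩ ⟨0, by omega⟩) 0 = 0)
    (hdern : iteratedDeriv (n - 1) (fun t => B t ⟨n - 1, by omega⟩ ⟨0, by omega⟩) 0 ≠ 0) :
    ∃ ε > (0 : ℝ), ∀ t : ℝ, 0 < |t| → |t| < ε →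
      Algebra.adjoin ℂ {A t, B t} = (⊤ : Subalgebra ℂ (Matrix (Fin n) (Fin n) ℂ)) := by
  -- distinctness of the diagonal of A 0
  have hd0 : ∀ i j : Fin n, i ≠ j → A 0 i i ≠ A 0 j j := by
    intro i j hij
    rw [hA0, Matrix.diagonal_apply_eq, Matrix.diagonal_apply_eq]
    intro h
    have h1 := congrArg norm h
    rw [norm_zpow, norm_zpow] at h1
    have habs : (0:ℝ) < ‖lam‖ := norm_pos_iff.mpr hlam
    have h2 := zpow_right_injective₀ habs hlam1 h1
    have h3 : (i:ℕ) = (j:ℕ) := by omega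
    exact hij (Fin.ext h3)
  -- eventual distinctness of the diagonal of A t
  have hAe : ∀ᶠ t in 𝓝 (0:ℝ), ∀ i j : Fin n, i ≠ j → A t i i ≠ A t j j := by
    rw [eventually_all]
    intro i
    rw [eventually_all]
    intro j
    by_cases hij : i = j
    · exact Eventually.of_forall fun t h => absurd hij h
    · have hcont : Continuous (fun t => A t i i - A t j j) :=
        ((hAsmooth i i).continuous).sub ((hAsmooth j j).continuous)
      have hne : A 0 i i - A 0 j j ≠ 0 := sub_ne_zero.mpr (hd0 i j hij)
      filter_upwards [hcont.continuousAt.eventually_ne hne] with t ht _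
      exact sub_ne_zero.mp ht
  -- eventual nonvanishing of upper entries of B t
  have hB0ne : ∀ i j : Fin n, (i:ℕ) ≤ (j:ℕ) → B 0 i j ≠ 0 := by
    intro i j hij
    rw [hB0 i j, if_pos hij]
    exact mul_ne_zero (pow_ne_zero _ (neg_ne_zero.mpr ha))
      (Nat.cast_ne_zero.mpr (Nat.choose_pos (Nat.sub_le _ _)).ne')
  have hBe : ∀ᶠ t in 𝓝 (0:ℝ), ∀ i j : Fin n, (i:ℕ) ≤ (j:ℕ) → B t i j ≠ 0 := by
    rw [eventually_all]
    intro i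
    rw [eventually_all]
    intro j
    by_cases hij : (i:ℕ) ≤ (j:ℕ)
    · filter_upwards [((hBsmooth i j).continuous.continuousAt).eventually_ne (hB0ne i j hij)]
        with t ht _
      exact ht
    · exact Eventually.of_forall fun t h => absurd h hij
  -- eventual nonvanishing of the (n-1, 0) entry of B t
  have hbne : ∀ᶠ t in 𝓝[≠] (0:ℝ),
      B t ⟨n - 1, by omega⟩ ⟨0, by omega⟩ ≠ 0 := by
    have hm1 : n - 2 + 1 = n - 1 := by omega
    apply eventually_ne_of_iteratedDeriv _ ((hBsmooth _ _).of_le (by simp)) (n - 2)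
    · intro k hk
      rcases Nat.eq_zero_or_pos k with rfl | hk1
      · rw [iteratedDeriv_zero]
        rw [hB0]
        rw [if_neg (by simp; omega)]
      · exact hder0 k hk1 hk
    · rw [hm1]
      exact hdern
  -- combine
  have hall : ∀ᶠ t in 𝓝[≠] (0:ℝ),
      (∀ i j : Fin n, i ≠ j → A t i i ≠ A t j j) ∧
      ((∀ i j : Fin n, (i:ℕ) ≤ (j:ℕ) → B t i j ≠ 0) ∧
        B t ⟨n - 1, by omega⟩ ⟨0, by omega⟩ ≠ 0) :=
    (hAe.filter_mono nhdsWithin_le_nhds).and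
      ((hBe.filter_mono nhdsWithin_le_nhds).and hbne)
  obtain ⟨ε, hε, hsub⟩ := Metric.mem_nhdsWithin_iff.mp hall
  refine ⟨ε, hε, fun t ht1 ht2 => ?_⟩
  have ht0 : t ≠ 0 := by
    intro h; rw [h] at ht1; simp at ht1
  have hmem : t ∈ Metric.ball (0:ℝ) ε ∩ {(0:ℝ)}ᶜ := by
    constructor
    · simpa [Real.dist_eq] using ht2
    · exact ht0
  obtain ⟨h1, h2, h3⟩ := hsub hmem
  exact adjoin_pair_eq_top n hn (A t) (B t) (hAdiag t) h1 h2 h3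
end

section
/- Let n ≥ 1 and let S ⊆ M(n,ℂ) be a unital ℂ-subalgebra. Suppose there exist nonzero vectors u, v ∈ ℂ^n such that the rank-one matrix u vᵀ belongs to S, the set {N u : N ∈ S} spans ℂ^n, and the set {Nᵀ v : N ∈ S} spans ℂ^n. Then S = M(n,ℂ). -/
/-!
Since `N (u vᵀ) M = (N u) (Mᵀ v)ᵀ`, the subalgebra `S` contains `a bᵀ` whenever `a` is of the
form `N u` and `b` of the form `Mᵀ v` with `N, M ∈ S`. As `(a, b) ↦ a bᵀ` is bilinear, the spanning
hypotheses upgrade this to all rank-one matrices, among them the matrix units.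
-/

namespace Matrix

variable {R m : Type*} [CommSemiring R] [Fintype m]

theorem mul_vecMulVec_mul (N M : Matrix m m R) (u v : m → R) :
    N * vecMulVec u v * M = vecMulVec (N *ᵥ u) (Mᵀ *ᵥ v) := by
  rw [mul_vecMulVec, vecMulVec_mul, mulVec_transpose]

theorem vecMulVec_mem_of_mem_span [DecidableEq m] {S : Subalgebra R (Matrix m m R)}
    {u v a b : m → R} (huv : vecMulVec u v ∈ S)
    (ha : a ∈ Submodule.span R {w : m → R | ∃ N ∈ S, w = N.mulVec u})
    (hb : b ∈ Submodule.span R {w : m → R | ∃ N ∈ S, w = N.transpose.mulVec v}) :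
    vecMulVec a b ∈ S := by
  have hab := Submodule.apply_mem_map₂ (vecMulVecBilin R R) ha hb
  rw [Submodule.map₂_span_span] at hab
  refine Submodule.span_le (p := Subalgebra.toSubmodule S) |>.mpr ?_ hab
  rintro _ ⟨_, ⟨N, hN, rfl⟩, _, ⟨M, hM, rfl⟩, rfl⟩
  simpa only [vecMulVecBilin_apply_apply, mul_vecMulVec_mul, Subalgebra.coe_toSubmodule,
    SetLike.mem_coe] using S.mul_mem (S.mul_mem hN huv) hM

theorem subalgebra_eq_top_of_forall_vecMulVec_mem [DecidableEq m]
    (S : Subalgebra R (Matrix m m R)) (h : ∀ a b : m → R, vecMulVec a b ∈ S) : S = ⊤ := by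
  refine eq_top_iff.mpr fun A _ => ?_
  rw [matrix_eq_sum_single A]
  refine Subalgebra.sum_mem _ fun i _ => Subalgebra.sum_mem _ fun j _ => ?_
  rw [← mul_one (A i j), ← smul_eq_mul, ← smul_single, single_eq_single_vecMulVec_single]
  exact S.smul_mem (h _ _) _

end Matrix

theorem subalgebra_eq_top_of_rank_one_general (n : ℕ)
    (S : Subalgebra ℂ (Matrix (Fin n) (Fin n) ℂ)) (u v : Fin n → ℂ)
    (huv : Matrix.vecMulVec u v ∈ S)
    (hspan₁ : Submodule.span ℂ {w : Fin n → ℂ | ∃ N ∈ S, w = N.mulVec u} = ⊤)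
    (hspan₂ : Submodule.span ℂ {w : Fin n → ℂ | ∃ N ∈ S, w = N.transpose.mulVec v} = ⊤) :
    S = ⊤ :=
  Matrix.subalgebra_eq_top_of_forall_vecMulVec_mem S fun _ _ =>
    Matrix.vecMulVec_mem_of_mem_span huv (hspan₁ ▸ Submodule.mem_top) (hspan₂ ▸ Submodule.mem_top)

/-- Let `S` be a unital `ℂ`-subalgebra of `M(n,ℂ)`.  If there are nonzero vectors
`u, v ∈ ℂⁿ` such that the rank-one matrix `u vᵀ` lies in `S`, the set `{N u : N ∈ S}`
spans `ℂⁿ`, and the set `{Nᵀ v : N ∈ S}` spans `ℂⁿ`, then `S = M(n,ℂ)`. -/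
theorem subalgebra_eq_top_of_rank_one (n : ℕ) (hn : 1 ≤ n)
    (S : Subalgebra ℂ (Matrix (Fin n) (Fin n) ℂ)) (u v : Fin n → ℂ)
    (hu : u ≠ 0) (hv : v ≠ 0)
    (huv : Matrix.vecMulVec u v ∈ S)
    (hspan₁ : Submodule.span ℂ {w : Fin n → ℂ | ∃ N ∈ S, w = N.mulVec u} = ⊤)
    (hspan₂ : Submodule.span ℂ {w : Fin n → ℂ | ∃ N ∈ S, w = N.transpose.mulVec v} = ⊤) :
    S = ⊤ :=
  subalgebra_eq_top_of_rank_one_general n S u v huv hspan₁ hspan₂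
end

section
/- Let m ≥ 1, let M be an m×m complex matrix, let λ ∈ ℂ with λ ≠ 0 be such that λ² is a simple root of the characteristic polynomial of M, and let a ∈ ℂ^m be a nonzero vector with M a = λ² a. Then: (i) a does not lie in the range of M − λ²I, and ℂ^m is the direct sum of the line spanned by a and the range of M − λ²I; and (ii) for every m×m complex matrix K, the linear map U : ℂ^m × ℂ × ℂ^m → ℂ^m × ℂ^m defined by U(x, y₀, y) = ((M − λ²I)x − 2λ y₀ a + K y, (M − I)y) has kernel of dimension dim ker(M − I) + 1. -/
/-!
Since `λ²` is a simple root, the generalized eigenspace of `M` at `λ²` is the line `ℂ a`; hence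
`ker (M - λ²I) = ℂ a`, and a vector `w` with `(M - λ²I) w ∈ ℂ a` is itself in `ℂ a`, which makes
`ℂ a` and the range of `M - λ²I` disjoint, so complementary by rank–nullity.

For (ii), regroup `U` as `((x, y₀), y) ↦ (L (x, y₀) + K y, (M - I) y)` with
`L (x, y₀) = (M - λ²I) x - 2λ y₀ a`. By (i) and `λ ≠ 0`, `L` is onto, so its kernel is a line, and
projecting `ker U` onto the `y`-coordinate is onto `ker (M - I)` with kernel `ker L × 0`.
-/

open Module LinearMap Submodule Matrix

namespace Module.End

variable {K V : Type*} [Field K] [AddCommGroup V] [Module K V] [FiniteDimensional K V]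
  {φ : End K V} {μ : K} {a : V}

theorem maxGenEigenspace_eq_span_singleton (hμ : φ.charpoly.rootMultiplicity μ = 1)
    (ha : a ≠ 0) (hφa : φ a = μ • a) : φ.maxGenEigenspace μ = K ∙ a := by
  refine (eq_of_le_of_finrank_le ?_ ?_).symm
  · rw [span_singleton_le_iff_mem]
    exact φ.genEigenspace_le_maximal μ 1 (mem_eigenspace_iff.2 hφa)
  · rw [finrank_maxGenEigenspace_eq, hμ, finrank_span_singleton ha]

theorem ker_sub_smul_eq_span_singleton (hμ : φ.charpoly.rootMultiplicity μ = 1)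
    (ha : a ≠ 0) (hφa : φ a = μ • a) : ker (φ - μ • 1) = K ∙ a := by
  refine le_antisymm ?_ ?_
  · rw [← eigenspace_def, ← maxGenEigenspace_eq_span_singleton hμ ha hφa]
    exact φ.genEigenspace_le_maximal μ 1
  · rw [span_singleton_le_iff_mem, ← eigenspace_def]
    exact mem_eigenspace_iff.2 hφa

theorem isCompl_span_singleton_range_sub_smul (hμ : φ.charpoly.rootMultiplicity μ = 1)
    (ha : a ≠ 0) (hφa : φ a = μ • a) : IsCompl (K ∙ a) (range (φ - μ • 1)) := by
  have hker := ker_sub_smul_eq_span_singleton hμ ha hφa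
  refine (isCompl_iff_disjoint _ _ ?_).2 ?_
  · rw [← hker, add_comm, (φ - μ • 1).finrank_range_add_finrank_ker]
  · rw [← hker, disjoint_def]
    rintro _ hv ⟨w, rfl⟩
    have hw : w ∈ φ.maxGenEigenspace μ :=
      (φ.mem_maxGenEigenspace μ w).2 ⟨2, by simpa [pow_two] using hv⟩
    rw [maxGenEigenspace_eq_span_singleton hμ ha hφa, ← hker] at hw
    exact hw

end Module.End

namespace LinearMap

variable {K X W V W' : Type*} [Field K] [AddCommGroup X] [Module K X] [AddCommGroup W]
  [Module K W] [AddCommGroup V] [Module K V] [AddCommGroup W'] [Module K W']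
  [FiniteDimensional K X] [FiniteDimensional K W]

theorem finrank_ker_coprod_prod_comp_snd {L : X →ₗ[K] V} (hL : Function.Surjective L)
    (k : W →ₗ[K] V) (B : W →ₗ[K] W') :
    finrank K (ker ((L.coprod k).prod (B ∘ₗ snd K X W))) =
      finrank K (ker L) + finrank K (ker B) := by
  set U := (L.coprod k).prod (B ∘ₗ snd K X W)
  let π : ker U →ₗ[K] ker B := ((snd K X W).comp (ker U).subtype).codRestrict _ fun u =>
    mem_ker.2 (congrArg Prod.snd (mem_ker.1 u.2))
  let ι : ker L →ₗ[K] ker U := ((inl K X W).comp (ker L).subtype).codRestrict _ fun z => by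
    simp [U, mem_ker.1 z.2]
  have hι : Function.Injective ι := fun z z' h => Subtype.ext (congrArg (·.1.1) h)
  have hπ : Function.Surjective π := by
    rintro ⟨y, hy⟩
    obtain ⟨z, hz⟩ := hL (-k y)
    exact ⟨⟨(z, y), by simp [U, hz, mem_ker.1 hy]⟩, rfl⟩
  have hιπ : range ι = ker π := by
    ext ⟨⟨z, y⟩, hu⟩
    simp only [mem_range, mem_ker, Subtype.ext_iff, π, ι, codRestrict_apply, coe_comp,
      Function.comp_apply, subtype_apply, snd_apply, ZeroMemClass.coe_zero]
    constructor
    · rintro ⟨z', hz'⟩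
      exact (congrArg Prod.snd hz').symm
    · rintro rfl
      exact ⟨⟨z, by simpa [U] using hu⟩, rfl⟩
  rw [← finrank_range_add_finrank_ker π, range_eq_top.2 hπ, finrank_top, ← hιπ,
    finrank_range_of_inj hι, add_comm]

end LinearMap

theorem eigenvector_complement_and_kernel_dim_general (m : ℕ)
    (M : Matrix (Fin m) (Fin m) ℂ) (lam : ℂ) (hlam : lam ≠ 0)
    (hsimple : M.charpoly.rootMultiplicity (lam ^ 2) = 1)
    (a : Fin m → ℂ) (ha : a ≠ 0) (hMa : M.mulVec a = lam ^ 2 • a) :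
    (a ∉ LinearMap.range (M - lam ^ 2 • (1 : Matrix (Fin m) (Fin m) ℂ)).mulVecLin ∧
      IsCompl (Submodule.span ℂ {a})
        (LinearMap.range (M - lam ^ 2 • (1 : Matrix (Fin m) (Fin m) ℂ)).mulVecLin)) ∧
    (∀ K : Matrix (Fin m) (Fin m) ℂ,
      ∀ U : ((Fin m → ℂ) × ℂ × (Fin m → ℂ)) →ₗ[ℂ] ((Fin m → ℂ) × (Fin m → ℂ)),
        (∀ (x : Fin m → ℂ) (y₀ : ℂ) (y : Fin m → ℂ),
          U (x, y₀, y) =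
            ((M - lam ^ 2 • (1 : Matrix (Fin m) (Fin m) ℂ)).mulVec x - (2 * lam * y₀) • a +
                K.mulVec y,
              (M - 1).mulVec y)) →
        Module.finrank ℂ (LinearMap.ker U) =
          Module.finrank ℂ (LinearMap.ker (M - (1 : Matrix (Fin m) (Fin m) ℂ)).mulVecLin) + 1) := by
  have hshift : (M - lam ^ 2 • 1).mulVecLin = M.mulVecLin - lam ^ 2 • 1 := by
    rw [← toLin'_apply', map_sub, map_smul, toLin'_one]
    rfl
  have hcompl : IsCompl (ℂ ∙ a) (range (M.mulVecLin - lam ^ 2 • 1)) :=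
    End.isCompl_span_singleton_range_sub_smul (by rwa [charpoly_mulVecLin]) ha hMa
  refine ⟨⟨hshift ▸ (disjoint_span_singleton' ha).1 hcompl.disjoint.symm, hshift ▸ hcompl⟩,
    fun K U hU => ?_⟩
  let L := (M - lam ^ 2 • 1).mulVecLin.coprod (toSpanSingleton ℂ _ (-(2 * lam) • a))
  have hL : Function.Surjective L := by
    rw [← range_eq_top, range_coprod, ← LinearMap.span_singleton_eq_range,
      span_singleton_smul_eq (by simp [hlam]), sup_comm, hshift, hcompl.sup_eq_top]
  have hLker : finrank ℂ (ker L) = 1 := by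
    have := L.finrank_range_add_finrank_ker
    rw [range_eq_top.2 hL, finrank_top, finrank_prod, finrank_self] at this
    omega
  have hUassoc : U ∘ₗ (LinearEquiv.prodAssoc ℂ _ ℂ _).toLinearMap =
      (L.coprod K.mulVecLin).prod ((M - 1).mulVecLin ∘ₗ snd ℂ _ _) := by
    refine LinearMap.ext fun ⟨⟨x, y₀⟩, y⟩ => ?_
    simp [L, hU, sub_mulVec, Matrix.smul_mulVec, smul_smul, mul_comm, ← sub_eq_add_neg]
  rw [← LinearEquiv.finrank_map_eq (LinearEquiv.prodAssoc ℂ _ ℂ _).symm,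
    ← comap_equiv_eq_map_symm, ← ker_comp, hUassoc, finrank_ker_coprod_prod_comp_snd hL, hLker,
    add_comm]

/-- Let `M` be an `m × m` complex matrix, `λ ≠ 0` with `λ²` a simple root of the
characteristic polynomial of `M`, and `a ≠ 0` with `M a = λ² a`.  Then:
(i) `a` is not in the range of `M - λ²I`, and `ℂ^m` is the direct sum of the line
spanned by `a` and the range of `M - λ²I`; and
(ii) for every `m × m` matrix `K`, the linear map
`U(x, y₀, y) = ((M - λ²I) x - 2 λ y₀ a + K y, (M - I) y)` has kernel of dimension
`dim ker (M - I) + 1`. -/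
theorem eigenvector_complement_and_kernel_dim (m : ℕ) (hm : 1 ≤ m)
    (M : Matrix (Fin m) (Fin m) ℂ) (lam : ℂ) (hlam : lam ≠ 0)
    (hsimple : M.charpoly.rootMultiplicity (lam ^ 2) = 1)
    (a : Fin m → ℂ) (ha : a ≠ 0) (hMa : M.mulVec a = lam ^ 2 • a) :
    (a ∉ LinearMap.range (M - lam ^ 2 • (1 : Matrix (Fin m) (Fin m) ℂ)).mulVecLin ∧
      IsCompl (Submodule.span ℂ {a})
        (LinearMap.range (M - lam ^ 2 • (1 : Matrix (Fin m) (Fin m) ℂ)).mulVecLin)) ∧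
    (∀ K : Matrix (Fin m) (Fin m) ℂ,
      ∀ U : ((Fin m → ℂ) × ℂ × (Fin m → ℂ)) →ₗ[ℂ] ((Fin m → ℂ) × (Fin m → ℂ)),
        (∀ (x : Fin m → ℂ) (y₀ : ℂ) (y : Fin m → ℂ),
          U (x, y₀, y) =
            ((M - lam ^ 2 • (1 : Matrix (Fin m) (Fin m) ℂ)).mulVec x - (2 * lam * y₀) • a +
                K.mulVec y,
              (M - 1).mulVec y)) →
        Module.finrank ℂ (LinearMap.ker U) =
          Module.finrank ℂ (LinearMap.ker (M - (1 : Matrix (Fin m) (Fin m) ℂ)).mulVecLin) + 1) :=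
  eigenvector_complement_and_kernel_dim_general m M lam hlam hsimple a ha hMa
end
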